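/- Summability for iBPDCA with (SC2) (Proposition 3.2(iii)-(iv)). In the iBPDCA setting with stopping criterion (SC2), if F is bounded below with ζ̃ := lim_{k→∞} (F(x^k) + σγ_max·D_φ(x^k, x^{k−1})), then Σ_{k=0}^∞ D_φ(x^{k+1}, x^k) ≤ (F(x^0) + σγ_max·D_φ(x^0, x^{−1}) − ζ̃)/(γ_min − L − σγ_max) < ∞ and Σ_{k=0}^∞ D_φ(x^k, x^{k+1}) ≤ (F(x^0) + σγ_max·D_φ(x^0, x^{−1}) − ζ̃)/γ_min < ∞; consequently D_φ(x^{k+1}, x^k) → 0 and D_φ(x^k, x^{k+1}) → 0. Moreover Σ_{k=0}^∞ (‖Δ^k‖² + |⟨Δ^k, x^{k+1} − x^k⟩| + δ_k) ≤ σγ_max Σ_{k=0}^∞ D_φ(x^k, x^{k−1}) < ∞, hence ‖Δ^k‖ → 0, |⟨Δ^k, x^{k+1} − x^k⟩| → 0 and δ_k → 0. -/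

import Mathlib

/-! One inexact step is a descent step: adding the ε-subgradient inequality for `P₁`, the
subgradient inequality for `P₂` and the upper smooth-adaptable bound on `f`, and using
`D_φ(v, u) + D_φ(u, v) = ⟨∇φ(v) − ∇φ(u), v − u⟩`, gives
`F(v) + γ_k (D_φ(v, u) + D_φ(u, v)) ≤ F(u) + L D_φ(v, u) + ⟨Δ^k, v − u⟩ + δ_k`
for `u = x^k`, `v = x^{k+1}`. (SC2) bounds the last two terms by `σ γ_max D_φ(x^k, x^{k−1})`,
so the merit sequence drops by `(γ_min − L − σ γ_max) D_φ(v, u) + γ_min D_φ(u, v)` at each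
step; telescoping against its limit `ζ̃` bounds both series. The residuals are dominated
termwise by `σ γ_max` times a shift of the first series. -/

open Filter Topology Bornology RealInnerProductSpace
open scoped Classical

noncomputable section

/-- `ℝⁿ` with the Euclidean inner product. -/
abbrev E (n : ℕ) := EuclideanSpace ℝ (Fin n)

/-- Bregman distance `D_φ(x, y) = φ(x) − φ(y) − ⟨∇φ(y), x − y⟩` associated with the
kernel `φ` whose gradient is `φ'`. -/
def breg {n : ℕ} (φ : E n → ℝ) (φ' : E n → E n) (x y : E n) : ℝ :=
  φ x - φ y - ⟪φ' y, x - y⟫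

/-- `ε`-subdifferential at `x` of the extended-real-valued convex function that is equal
to `h` on its domain `S` and `+∞` outside `S`:
`∂_ε h(x) = {d : h(y) ≥ h(x) + ⟨d, y − x⟩ − ε for all y}` (the inequality being automatic
for `y ∉ S`). -/
def epsSubdiff {n : ℕ} (S : Set (E n)) (h : E n → ℝ) (ε : ℝ) (x : E n) : Set (E n) :=
  {d | ∀ y ∈ S, h x + ⟪d, y - x⟫ - ε ≤ h y}

/-- `prevSeq x xm k` is `x^{k-1}`, with `x^{-1} := xm`. -/
def prevSeq {n : ℕ} (x : ℕ → E n) (xm : E n) : ℕ → E n :=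
  fun k => if k = 0 then xm else x (k - 1)

/-- The merit value `F(x^k) + σ γ_max D_φ(x^k, x^{k−1})`. -/
def meritSeq {n : ℕ} (P₁ P₂ f φ : E n → ℝ) (φ' : E n → E n) (σ γmax : ℝ)
    (x : ℕ → E n) (xm : E n) (k : ℕ) : ℝ :=
  P₁ (x k) - P₂ (x k) + f (x k) + σ * γmax * breg φ φ' (x k) (prevSeq x xm k)

section Iterates

variable {n : ℕ} {φ : E n → ℝ} {φ' : E n → E n}

lemma breg_nonneg {U : Set (E n)} (hφ' : ∀ u ∈ U, HasGradientAt φ (φ' u) u)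
    (hφ : ConvexOn ℝ U φ) {p q : E n} (hp : p ∈ U) (hq : q ∈ U) : 0 ≤ breg φ φ' p q := by
  have hconv : ConvexOn ℝ (AffineMap.lineMap q p ⁻¹' U) (φ ∘ AffineMap.lineMap q p) :=
    hφ.comp_affineMap _
  have hderiv : HasDerivAt (φ ∘ AffineMap.lineMap q p) ⟪φ' q, p - q⟫ (0 : ℝ) := by
    have hφq := (hφ' q hq).hasFDerivAt
    rw [← AffineMap.lineMap_apply_zero (k := ℝ) q p] at hφq
    simpa using hφq.comp_hasDerivAt (0 : ℝ) AffineMap.hasDerivAt_lineMap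
  have hslope := hconv.le_slope_of_hasDerivAt (by simpa) (by simpa) zero_lt_one hderiv
  simp only [slope, Function.comp_apply, AffineMap.lineMap_apply_zero,
    AffineMap.lineMap_apply_one, sub_zero, inv_one, one_smul, vsub_eq_sub] at hslope
  rw [breg]
  linarith

lemma breg_add_breg_swap (a b : E n) :
    breg φ φ' a b + breg φ φ' b a = ⟪φ' a - φ' b, a - b⟫ := by
  have h : b - a = -(a - b) := by abel
  simp only [breg, inner_sub_left, h, inner_neg_right]
  ring

lemma inexact_step_descent {S : Set (E n)} {P₁ P₂ f : E n → ℝ} {f' : E n → E n}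
    {L γ δ : ℝ} {u v d ξ Δ : E n} (hu : u ∈ S)
    (hf : f v - f u - ⟪f' u, v - u⟫ ≤ L * breg φ φ' v u)
    (hd : d ∈ epsSubdiff S P₁ δ v) (hξ : ξ ∈ epsSubdiff Set.univ P₂ 0 u)
    (hΔ : Δ = d + f' u - ξ + γ • (φ' v - φ' u)) :
    P₁ v - P₂ v + f v + γ * (breg φ φ' v u + breg φ φ' u v)
      ≤ P₁ u - P₂ u + f u + L * breg φ φ' v u + (⟪Δ, v - u⟫ + δ) := by
  have hP₁ := hd u hu
  have hP₂ := hξ v (Set.mem_univ v)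
  have hflip : ⟪d, u - v⟫ = -⟪d, v - u⟫ := by
    rw [← inner_neg_right, neg_sub]
  have hΔuv : ⟪Δ, v - u⟫ = ⟪d, v - u⟫ + ⟪f' u, v - u⟫ - ⟪ξ, v - u⟫
      + γ * (breg φ φ' v u + breg φ φ' u v) := by
    rw [hΔ, breg_add_breg_swap]
    simp only [inner_add_left, inner_sub_left, real_inner_smul_left]
  linarith

@[simp] lemma prevSeq_zero (x : ℕ → E n) (xm : E n) : prevSeq x xm 0 = xm := rfl

@[simp] lemma prevSeq_succ (x : ℕ → E n) (xm : E n) (k : ℕ) :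
    prevSeq x xm (k + 1) = x k := rfl

lemma prevSeq_mem {s : Set (E n)} {x : ℕ → E n} {xm : E n} (hxm : xm ∈ s)
    (hx : ∀ k, x k ∈ s) (k : ℕ) : prevSeq x xm k ∈ s := by
  cases k <;> simp [hxm, hx]

lemma meritSeq_succ_add_le {S : Set (E n)} {P₁ P₂ f : E n → ℝ} {f' : E n → E n}
    {L γmin γmax γk σ δk : ℝ} {x : ℕ → E n} {xm d ξ Δ : E n} {k : ℕ} (hxk : x k ∈ S)
    (hf : f (x (k + 1)) - f (x k) - ⟪f' (x k), x (k + 1) - x k⟫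
      ≤ L * breg φ φ' (x (k + 1)) (x k))
    (hd : d ∈ epsSubdiff S P₁ δk (x (k + 1))) (hξ : ξ ∈ epsSubdiff Set.univ P₂ 0 (x k))
    (hΔ : Δ = d + f' (x k) - ξ + γk • (φ' (x (k + 1)) - φ' (x k)))
    (hγk : γmin ≤ γk)
    (hnext : 0 ≤ breg φ φ' (x (k + 1)) (x k)) (hback : 0 ≤ breg φ φ' (x k) (x (k + 1)))
    (hSC2 : ‖Δ‖ ^ 2 + |⟪Δ, x (k + 1) - x k⟫| + δk
      ≤ σ * γmax * breg φ φ' (x k) (prevSeq x xm k)) :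
    meritSeq P₁ P₂ f φ φ' σ γmax x xm (k + 1)
        + (γmin - L - σ * γmax) * breg φ φ' (x (k + 1)) (x k)
        + γmin * breg φ φ' (x k) (x (k + 1))
      ≤ meritSeq P₁ P₂ f φ φ' σ γmax x xm k := by
  have hstep := inexact_step_descent hxk hf hd hξ hΔ
  have hγ : γmin * (breg φ φ' (x (k + 1)) (x k) + breg φ φ' (x k) (x (k + 1)))
      ≤ γk * (breg φ φ' (x (k + 1)) (x k) + breg φ φ' (x k) (x (k + 1))) := by
    gcongr
  simp only [meritSeq, prevSeq_succ]
  linarith [le_abs_self ⟪Δ, x (k + 1) - x k⟫, sq_nonneg ‖Δ‖]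

end Iterates

lemma summable_and_tsum_le_of_descent {M a : ℕ → ℝ} {c ζ : ℝ} (hc : 0 < c)
    (ha : ∀ k, 0 ≤ a k) (hM : ∀ k, M (k + 1) + c * a k ≤ M k)
    (hζ : Tendsto M atTop (𝓝 ζ)) :
    Summable a ∧ ∑' k, a k ≤ (M 0 - ζ) / c := by
  have hanti : Antitone M := antitone_nat_of_succ_le fun k => by
    nlinarith [hM k, mul_nonneg hc.le (ha k)]
  have hpartial : ∀ N, ∑ i ∈ Finset.range N, a i ≤ (M 0 - ζ) / c := by
    intro N
    rw [le_div_iff₀' hc, Finset.mul_sum]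
    calc ∑ i ∈ Finset.range N, c * a i
        ≤ ∑ i ∈ Finset.range N, (M i - M (i + 1)) :=
          Finset.sum_le_sum fun i _ => by linarith [hM i]
      _ = M 0 - M N := Finset.sum_range_sub' M N
      _ ≤ M 0 - ζ := by linarith [hanti.le_of_tendsto hζ N]
  exact ⟨summable_of_sum_range_le ha hpartial, Real.tsum_le_of_sum_range_le ha hpartial⟩

lemma tendsto_zero_of_sq_add_abs_add {a b c : ℕ → ℝ} (ha : ∀ k, 0 ≤ a k) (hc : ∀ k, 0 ≤ c k)
    (h : Tendsto (fun k => a k ^ 2 + |b k| + c k) atTop (𝓝 0)) :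
    Tendsto a atTop (𝓝 0) ∧ Tendsto (fun k => |b k|) atTop (𝓝 0) ∧ Tendsto c atTop (𝓝 0) := by
  have ha2 : Tendsto (fun k => a k ^ 2) atTop (𝓝 0) :=
    squeeze_zero (fun k => sq_nonneg _) (fun k => by linarith [hc k, abs_nonneg (b k)]) h
  refine ⟨?_, squeeze_zero (fun k => abs_nonneg _) (fun k => ?_) h,
    squeeze_zero hc (fun k => ?_) h⟩
  · simpa [Real.sqrt_sq (ha _)] using ha2.sqrt
  all_goals linarith [hc k, sq_nonneg (a k), abs_nonneg (b k)]

theorem ibpdca_sc2_summable_general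
    {n : ℕ} (S U X : Set (E n)) (P₁ P₂ f φ : E n → ℝ)
    (f' φ' : E n → E n) (L γmin γmax σ : ℝ)
    (x : ℕ → E n) (xm : E n) (hxm : xm ∈ U) (γ δ : ℕ → ℝ) (ξ d Δ : ℕ → E n)
    -- `f` and `φ` are differentiable on the open convex set `U`, `φ` strictly convex on `U`
    (hφdiff : ∀ u ∈ U, HasGradientAt φ (φ' u) u)
    (hφsc : StrictConvexOn ℝ U φ)
    -- `(f, φ)` is `L`-smooth adaptable restricted on `X`
    (hL : 0 ≤ L)
    (hsmad : ∀ u ∈ X, ∀ v ∈ X, |f v - f u - ⟪f' u, v - u⟫| ≤ L * breg φ φ' v u)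
    -- the iterates and the inexact optimality condition
    (hxmem : ∀ k, x k ∈ S ∩ U ∩ X)
    (hLγ : L < γmin) (hγ : ∀ k, γmin ≤ γ k ∧ γ k ≤ γmax)
    (hδpos : ∀ k, 0 ≤ δ k)
    (hξ : ∀ k, ξ k ∈ epsSubdiff Set.univ P₂ 0 (x k))
    (hd : ∀ k, d (k + 1) ∈ epsSubdiff S P₁ (δ k) (x (k + 1)))
    (hΔ : ∀ k, Δ k = d (k + 1) + f' (x k) - ξ k + γ k • (φ' (x (k + 1)) - φ' (x k)))
    -- the stopping criterion
    (hσ0 : 0 ≤ σ) (hσ : σ < (γmin - L) / γmax)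
    (hSC2 : ∀ k, ‖Δ k‖ ^ 2 + |⟪Δ k, x (k + 1) - x k⟫| + δ k
        ≤ σ * γ k * breg φ φ' (x k) (prevSeq x xm k))
    -- `F` is bounded below, and `ζt` is the limit of the merit sequence
    (ζt : ℝ) (hζ : Tendsto (meritSeq P₁ P₂ f φ φ' σ γmax x xm) atTop (𝓝 ζt)) :
    (Summable (fun k => breg φ φ' (x (k + 1)) (x k))
      ∧ ∑' k, breg φ φ' (x (k + 1)) (x k)
          ≤ ((P₁ (x 0) - P₂ (x 0) + f (x 0)) + σ * γmax * breg φ φ' (x 0) xm - ζt)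
              / (γmin - L - σ * γmax))
    ∧ (Summable (fun k => breg φ φ' (x k) (x (k + 1)))
      ∧ ∑' k, breg φ φ' (x k) (x (k + 1))
          ≤ ((P₁ (x 0) - P₂ (x 0) + f (x 0)) + σ * γmax * breg φ φ' (x 0) xm - ζt) / γmin)
    ∧ Tendsto (fun k => breg φ φ' (x (k + 1)) (x k)) atTop (𝓝 0)
    ∧ Tendsto (fun k => breg φ φ' (x k) (x (k + 1))) atTop (𝓝 0)
    ∧ (Summable (fun k => breg φ φ' (x k) (prevSeq x xm k))
      ∧ Summable (fun k => ‖Δ k‖ ^ 2 + |⟪Δ k, x (k + 1) - x k⟫| + δ k)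
      ∧ ∑' k, (‖Δ k‖ ^ 2 + |⟪Δ k, x (k + 1) - x k⟫| + δ k)
          ≤ σ * γmax * ∑' k, breg φ φ' (x k) (prevSeq x xm k))
    ∧ Tendsto (fun k => ‖Δ k‖) atTop (𝓝 0)
    ∧ Tendsto (fun k => |⟪Δ k, x (k + 1) - x k⟫|) atTop (𝓝 0)
    ∧ Tendsto δ atTop (𝓝 0) := by
  have hxU (k : ℕ) : x k ∈ U := (hxmem k).1.2
  have hbreg {p q : E n} (hp : p ∈ U) (hq : q ∈ U) : 0 ≤ breg φ φ' p q :=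
    breg_nonneg hφdiff hφsc.convexOn hp hq
  have hγmin : 0 < γmin := hL.trans_lt hLγ
  have hc : 0 < γmin - L - σ * γmax := by
    have hγmax : 0 < γmax := hγmin.trans_le ((hγ 0).1.trans (hγ 0).2)
    linarith [(lt_div_iff₀ hγmax).mp hσ]
  have hres (k : ℕ) : ‖Δ k‖ ^ 2 + |⟪Δ k, x (k + 1) - x k⟫| + δ k
      ≤ σ * γmax * breg φ φ' (x k) (prevSeq x xm k) :=
    (hSC2 k).trans (by gcongr; exacts [hbreg (hxU k) (prevSeq_mem hxm hxU k), (hγ k).2])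
  have hdesc (k : ℕ) := meritSeq_succ_add_le (hxmem k).1.1
    (abs_le.mp (hsmad _ (hxmem k).2 _ (hxmem (k + 1)).2)).2 (hd k) (hξ k) (hΔ k) (hγ k).1
    (hbreg (hxU (k + 1)) (hxU k)) (hbreg (hxU k) (hxU (k + 1))) (hres k)
  obtain ⟨hA, hAle⟩ := summable_and_tsum_le_of_descent hc (fun k => hbreg (hxU _) (hxU k))
    (fun k => by linarith [hdesc k, mul_nonneg hγmin.le (hbreg (hxU k) (hxU (k + 1)))]) hζ
  obtain ⟨hB, hBle⟩ := summable_and_tsum_le_of_descent hγmin (fun k => hbreg (hxU k) (hxU _))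
    (fun k => by linarith [hdesc k, mul_nonneg hc.le (hbreg (hxU (k + 1)) (hxU k))]) hζ
  have hW : Summable fun k => breg φ φ' (x k) (prevSeq x xm k) := (summable_nat_add_iff 1).mp hA
  have hR : Summable fun k => ‖Δ k‖ ^ 2 + |⟪Δ k, x (k + 1) - x k⟫| + δ k :=
    .of_nonneg_of_le (fun k => by have := hδpos k; positivity) hres (hW.mul_left _)
  obtain ⟨hΔ0, hinner0, hδ0⟩ :=
    tendsto_zero_of_sq_add_abs_add (fun k => norm_nonneg _) hδpos hR.tendsto_atTop_zero
  exact ⟨⟨hA, hAle⟩, ⟨hB, hBle⟩, hA.tendsto_atTop_zero, hB.tendsto_atTop_zero,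
    ⟨hW, hR, (hR.tsum_le_tsum hres (hW.mul_left _)).trans_eq tsum_mul_left⟩, hΔ0, hinner0, hδ0⟩

/-- **Proposition 3.2(iii)-(iv).** Summability for iBPDCA with (SC2). -/
theorem ibpdca_sc2_summable
    {n : ℕ} (S U X : Set (E n)) (P₁ P₂ f φ : E n → ℝ)
    (f' φ' : E n → E n) (L γmin γmax σ : ℝ)
    (x : ℕ → E n) (xm : E n) (hxm : xm ∈ U) (γ δ : ℕ → ℝ) (ξ d Δ : ℕ → E n)
    -- `P₁` is proper, lower semicontinuous and convex (domain `S`, real values `P₁` on `S`)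
    (hSne : S.Nonempty)
    (hP₁conv : ConvexOn ℝ S P₁)
    (hP₁lsc : LowerSemicontinuous (fun y => if y ∈ S then (P₁ y : EReal) else (⊤ : EReal)))
    -- `P₂` is convex and continuous
    (hP₂conv : ConvexOn ℝ Set.univ P₂) (hP₂cont : Continuous P₂)
    -- `f` and `φ` are differentiable on the open convex set `U`, `φ` strictly convex on `U`
    (hUopen : IsOpen U) (hUconv : Convex ℝ U)
    (hfdiff : ∀ u ∈ U, HasGradientAt f (f' u) u)
    (hφdiff : ∀ u ∈ U, HasGradientAt φ (φ' u) u)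
    (hφsc : StrictConvexOn ℝ U φ)
    -- `(f, φ)` is `L`-smooth adaptable restricted on `X`
    (hL : 0 ≤ L)
    (hsmad : ∀ u ∈ X, ∀ v ∈ X, |f v - f u - ⟪f' u, v - u⟫| ≤ L * breg φ φ' v u)
    -- the iterates and the inexact optimality condition
    (hxmem : ∀ k, x k ∈ S ∩ U ∩ X)
    (hLγ : L < γmin) (hγ : ∀ k, γmin ≤ γ k ∧ γ k ≤ γmax)
    (hδpos : ∀ k, 0 ≤ δ k)
    (hξ : ∀ k, ξ k ∈ epsSubdiff Set.univ P₂ 0 (x k))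
    (hd : ∀ k, d (k + 1) ∈ epsSubdiff S P₁ (δ k) (x (k + 1)))
    (hΔ : ∀ k, Δ k = d (k + 1) + f' (x k) - ξ k + γ k • (φ' (x (k + 1)) - φ' (x k)))
    -- the stopping criterion
    (hσ0 : 0 ≤ σ) (hσ : σ < (γmin - L) / γmax)
    (hSC2 : ∀ k, ‖Δ k‖ ^ 2 + |⟪Δ k, x (k + 1) - x k⟫| + δ k
        ≤ σ * γ k * breg φ φ' (x k) (prevSeq x xm k))
    -- `F` is bounded below, and `ζt` is the limit of the merit sequence
    (hFbdd : ∃ mlo : ℝ, ∀ y ∈ S, mlo ≤ P₁ y - P₂ y + f y)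
    (ζt : ℝ) (hζ : Tendsto (meritSeq P₁ P₂ f φ φ' σ γmax x xm) atTop (𝓝 ζt)) :
    (Summable (fun k => breg φ φ' (x (k + 1)) (x k))
      ∧ ∑' k, breg φ φ' (x (k + 1)) (x k)
          ≤ ((P₁ (x 0) - P₂ (x 0) + f (x 0)) + σ * γmax * breg φ φ' (x 0) xm - ζt)
              / (γmin - L - σ * γmax))
    ∧ (Summable (fun k => breg φ φ' (x k) (x (k + 1)))
      ∧ ∑' k, breg φ φ' (x k) (x (k + 1))
          ≤ ((P₁ (x 0) - P₂ (x 0) + f (x 0)) + σ * γmax * breg φ φ' (x 0) xm - ζt) / γmin)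
    ∧ Tendsto (fun k => breg φ φ' (x (k + 1)) (x k)) atTop (𝓝 0)
    ∧ Tendsto (fun k => breg φ φ' (x k) (x (k + 1))) atTop (𝓝 0)
    ∧ (Summable (fun k => breg φ φ' (x k) (prevSeq x xm k))
      ∧ Summable (fun k => ‖Δ k‖ ^ 2 + |⟪Δ k, x (k + 1) - x k⟫| + δ k)
      ∧ ∑' k, (‖Δ k‖ ^ 2 + |⟪Δ k, x (k + 1) - x k⟫| + δ k)
          ≤ σ * γmax * ∑' k, breg φ φ' (x k) (prevSeq x xm k))
    ∧ Tendsto (fun k => ‖Δ k‖) atTop (𝓝 0)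
    ∧ Tendsto (fun k => |⟪Δ k, x (k + 1) - x k⟫|) atTop (𝓝 0)
    ∧ Tendsto δ atTop (𝓝 0) :=
  ibpdca_sc2_summable_general S U X P₁ P₂ f φ f' φ' L γmin γmax σ x xm hxm γ δ ξ d Δ hφdiff hφsc hL
    hsmad hxmem hLγ hγ hδpos hξ hd hΔ hσ0 hσ hSC2 ζt hζ
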